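/- For positive reals θ, μ we have Ψ_1(θ)Ψ_2(θ+μ) - Ψ_1(θ+μ)Ψ_2(θ) > 0, where Ψ_n denotes the polygamma function of order n. -/

import Mathlib

/-!
With `I k x = ∫₀^∞ tᵏ e^{-xt} / (1 - e^{-t}) dt` we have `Ψ₁ = I 1` and `Ψ₂ = -I 2`, so the claim is
`I 1 θ · I 2 (θ+μ) < I 2 θ · I 1 (θ+μ)`. Against the positive weight `w(t) = t e^{-θt} / (1 - e^{-t})`
this is Chebyshev's integral inequality for the increasing function `t` and the decreasing function
`e^{-μt}`: the four integrals are `∫ w`, `∫ w t e^{-μt}`, `∫ w t` and `∫ w e^{-μt}`.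
-/

open MeasureTheory Set Real

section Chebyshev

variable {α : Type*}

/-- Symmetrising `∫∫ w(x) w(y) (f x - f y) (g x - g y)` is the standard proof of Chebyshev's
integral inequality. -/
def chebyshevKernel (w f g : α → ℝ) (p : α × α) : ℝ :=
  w p.1 * w p.2 * ((f p.1 - f p.2) * (g p.1 - g p.2))

theorem chebyshevKernel_eq (w f g : α → ℝ) (p : α × α) :
    chebyshevKernel w f g p =
      w p.1 * f p.1 * g p.1 * w p.2 - w p.1 * f p.1 * (w p.2 * g p.2)
        - w p.1 * g p.1 * (w p.2 * f p.2) + w p.1 * (w p.2 * f p.2 * g p.2) := by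
  unfold chebyshevKernel; ring

section LinearOrder

variable [LinearOrder α] {w f g : α → ℝ}

theorem chebyshevKernel_nonpos (hf : Monotone f) (hg : Antitone g) {p : α × α}
    (h₁ : 0 ≤ w p.1) (h₂ : 0 ≤ w p.2) : chebyshevKernel w f g p ≤ 0 := by
  refine mul_nonpos_of_nonneg_of_nonpos (mul_nonneg h₁ h₂) ?_
  rcases le_total p.1 p.2 with h | h
  · exact mul_nonpos_of_nonpos_of_nonneg (sub_nonpos.2 (hf h)) (sub_nonneg.2 (hg h))
  · exact mul_nonpos_of_nonneg_of_nonpos (sub_nonneg.2 (hf h)) (sub_nonpos.2 (hg h))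

theorem chebyshevKernel_neg (hf : StrictMono f) (hg : StrictAnti g) {x y : α} (hxy : x < y)
    (hx : 0 < w x) (hy : 0 < w y) : chebyshevKernel w f g (x, y) < 0 :=
  mul_neg_of_pos_of_neg (mul_pos hx hy)
    (mul_neg_of_neg_of_pos (sub_neg.2 (hf hxy)) (sub_pos.2 (hg hxy)))

end LinearOrder

variable [MeasurableSpace α] {ν : Measure α} {w f g : α → ℝ}
  (hw : Integrable w ν) (hwf : Integrable (fun x => w x * f x) ν)
  (hwg : Integrable (fun x => w x * g x) ν) (hwfg : Integrable (fun x => w x * f x * g x) ν)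
include hw hwf hwg hwfg

theorem integrable_chebyshevKernel : Integrable (chebyshevKernel w f g) (ν.prod ν) := by
  simp_rw [funext (chebyshevKernel_eq w f g)]
  exact (((hwfg.mul_prod hw).sub (hwf.mul_prod hwg)).sub (hwg.mul_prod hwf)).add
    (hw.mul_prod hwfg)

theorem integral_chebyshevKernel [SFinite ν] :
    ∫ p, chebyshevKernel w f g p ∂ν.prod ν =
      2 * ((∫ x, w x ∂ν) * ∫ x, w x * f x * g x ∂ν
        - (∫ x, w x * f x ∂ν) * ∫ x, w x * g x ∂ν) := by
  have h₁ : Integrable (fun p : α × α => w p.1 * f p.1 * g p.1 * w p.2) (ν.prod ν) :=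
    hwfg.mul_prod hw
  have h₂ : Integrable (fun p : α × α => w p.1 * f p.1 * (w p.2 * g p.2)) (ν.prod ν) :=
    hwf.mul_prod hwg
  have h₃ : Integrable (fun p : α × α => w p.1 * g p.1 * (w p.2 * f p.2)) (ν.prod ν) :=
    hwg.mul_prod hwf
  have h₄ : Integrable (fun p : α × α => w p.1 * (w p.2 * f p.2 * g p.2)) (ν.prod ν) :=
    hw.mul_prod hwfg
  simp_rw [chebyshevKernel_eq w f g]
  rw [integral_add ?_ h₄, integral_sub ?_ h₃, integral_sub h₁ h₂,
    integral_prod_mul (fun x => w x * f x * g x) w,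
    integral_prod_mul (fun x => w x * f x) (fun x => w x * g x),
    integral_prod_mul (fun x => w x * g x) (fun x => w x * f x),
    integral_prod_mul w (fun x => w x * f x * g x)]
  · ring
  · exact h₁.sub h₂
  · exact (h₁.sub h₂).sub h₃

/-- Chebyshev's integral inequality, in a strict form. -/
theorem integral_mul_integral_lt_of_strictMono_of_strictAnti [LinearOrder α] [SFinite ν]
    (hw₀ : 0 ≤ᵐ[ν] w) (hf : StrictMono f) (hg : StrictAnti g) {s t : Set α}
    (hst : ∀ x ∈ s, ∀ y ∈ t, x < y) (hws : ∀ x ∈ s, 0 < w x) (hwt : ∀ y ∈ t, 0 < w y)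
    (hs : ν s ≠ 0) (ht : ν t ≠ 0) :
    (∫ x, w x ∂ν) * ∫ x, w x * f x * g x ∂ν < (∫ x, w x * f x ∂ν) * ∫ x, w x * g x ∂ν := by
  have hK : 0 ≤ᵐ[ν.prod ν] fun p => -chebyshevKernel w f g p := by
    filter_upwards [Measure.quasiMeasurePreserving_fst.ae hw₀,
      Measure.quasiMeasurePreserving_snd.ae hw₀] with p h₁ h₂
    exact neg_nonneg.2 (chebyshevKernel_nonpos hf.monotone hg.antitone h₁ h₂)
  have hsupp : s ×ˢ t ⊆ Function.support fun p => -chebyshevKernel w f g p :=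
    fun p ⟨hp₁, hp₂⟩ => (neg_pos.2 (chebyshevKernel_neg hf hg (hst _ hp₁ _ hp₂)
      (hws _ hp₁) (hwt _ hp₂))).ne'
  have hpos : 0 < ∫ p, -chebyshevKernel w f g p ∂ν.prod ν := by
    rw [integral_pos_iff_support_of_nonneg_ae hK
      (integrable_chebyshevKernel hw hwf hwg hwfg).neg]
    refine lt_of_lt_of_le ?_ (measure_mono hsupp)
    rw [Measure.prod_prod]
    exact ENNReal.mul_pos hs ht
  rw [integral_neg, integral_chebyshevKernel hw hwf hwg hwfg] at hpos
  linarith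

end Chebyshev

noncomputable section

def polygammaIntegrand (k : ℕ) (x t : ℝ) : ℝ :=
  t ^ k * exp (-x * t) / (1 - exp (-t))

def polygammaIntegral (k : ℕ) (x : ℝ) : ℝ :=
  ∫ t in Ioi 0, polygammaIntegrand k x t

end

theorem one_sub_exp_neg_pos {t : ℝ} (ht : 0 < t) : 0 < 1 - exp (-t) :=
  sub_pos.2 (exp_lt_one_iff.2 (neg_neg_of_pos ht))

theorem polygammaIntegrand_pos (k : ℕ) (x : ℝ) {t : ℝ} (ht : 0 < t) :
    0 < polygammaIntegrand k x t :=
  div_pos (mul_pos (pow_pos ht k) (exp_pos _)) (one_sub_exp_neg_pos ht)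

theorem le_one_sub_exp_neg_mul_one_add {t : ℝ} : t ≤ (1 - exp (-t)) * (1 + t) := by
  have h : exp (-t) * (1 + t) ≤ 1 := by
    calc exp (-t) * (1 + t) ≤ exp (-t) * exp t := by
          gcongr; linarith [add_one_le_exp t]
      _ = 1 := by rw [← exp_add, neg_add_cancel, exp_zero]
  nlinarith

theorem integrableOn_pow_mul_exp_neg_mul (m : ℕ) {x : ℝ} (hx : 0 < x) :
    IntegrableOn (fun t => t ^ m * exp (-x * t)) (Ioi 0) := by
  simpa [rpow_natCast] using integrableOn_rpow_mul_exp_neg_mul_rpow (p := 1) (s := m)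
    (by linarith [m.cast_nonneg (α := ℝ)]) one_pos hx

/-- Near `0` the integrand behaves like `t ^ (k - 1)`, since `t / (1 - e^{-t}) ≤ 1 + t`. -/
theorem integrableOn_polygammaIntegrand {k : ℕ} (hk : 1 ≤ k) {x : ℝ} (hx : 0 < x) :
    IntegrableOn (polygammaIntegrand k x) (Ioi 0) := by
  obtain ⟨j, rfl⟩ := Nat.exists_eq_add_of_le' hk
  refine ((integrableOn_pow_mul_exp_neg_mul j hx).add
    (integrableOn_pow_mul_exp_neg_mul (j + 1) hx)).mono'
    (Measurable.aestronglyMeasurable (by unfold polygammaIntegrand; fun_prop)) ?_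
  refine (ae_restrict_iff' measurableSet_Ioi).2 (ae_of_all _ fun t (ht : 0 < t) => ?_)
  rw [Real.norm_of_nonneg (polygammaIntegrand_pos _ _ ht).le, polygammaIntegrand,
    div_le_iff₀ (one_sub_exp_neg_pos ht)]
  have := mul_le_mul_of_nonneg_left (le_one_sub_exp_neg_mul_one_add (t := t))
    (mul_pos (pow_pos ht j) (exp_pos (-x * t))).le
  simp only [Pi.add_apply, pow_succ] at this ⊢
  linarith

theorem polygammaIntegral_one_mul_two_lt {θ μ : ℝ} (hθ : 0 < θ) (hμ : 0 < μ) :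
    polygammaIntegral 1 θ * polygammaIntegral 2 (θ + μ) <
      polygammaIntegral 2 θ * polygammaIntegral 1 (θ + μ) := by
  set w := polygammaIntegrand 1 θ
  have hθμ : 0 < θ + μ := add_pos hθ hμ
  have e₁ (t : ℝ) : w t * t = polygammaIntegrand 2 θ t := by
    simp only [w, polygammaIntegrand]; ring
  have e₂ (t : ℝ) : w t * exp (-μ * t) = polygammaIntegrand 1 (θ + μ) t := by
    simp only [w, polygammaIntegrand]; rw [neg_add, add_mul, exp_add]; ring
  have e₃ (t : ℝ) : w t * t * exp (-μ * t) = polygammaIntegrand 2 (θ + μ) t := by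
    simp only [w, polygammaIntegrand]; rw [neg_add, add_mul, exp_add]; ring
  have hIoo {a b : ℝ} (ha : 0 ≤ a) (hab : a < b) : volume.restrict (Ioi 0) (Ioo a b) ≠ 0 := by
    rw [Measure.restrict_apply measurableSet_Ioo,
      inter_eq_left.2 (Ioo_subset_Ioi_self.trans (Ioi_subset_Ioi ha))]
    exact (Measure.measure_Ioo_pos volume).2 hab |>.ne'
  have key := integral_mul_integral_lt_of_strictMono_of_strictAnti
    (ν := volume.restrict (Ioi 0)) (w := w) (f := fun t => t) (g := fun t => exp (-μ * t))
    (integrableOn_polygammaIntegrand le_rfl hθ)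
    ((integrableOn_polygammaIntegrand one_le_two hθ).congr_fun (fun t _ => (e₁ t).symm)
      measurableSet_Ioi)
    ((integrableOn_polygammaIntegrand le_rfl hθμ).congr_fun (fun t _ => (e₂ t).symm)
      measurableSet_Ioi)
    ((integrableOn_polygammaIntegrand one_le_two hθμ).congr_fun (fun t _ => (e₃ t).symm)
      measurableSet_Ioi)
    (ae_restrict_of_forall_mem measurableSet_Ioi fun t ht => (polygammaIntegrand_pos 1 θ ht).le)
    strictMono_id (fun a b hab => exp_lt_exp.2 (by nlinarith))
    (s := Ioo 0 1) (t := Ioo 1 2) (fun x hx y hy => hx.2.trans hy.1)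
    (fun x hx => polygammaIntegrand_pos 1 θ hx.1)
    (fun y hy => polygammaIntegrand_pos 1 θ (one_pos.trans hy.1))
    (hIoo le_rfl one_pos) (hIoo zero_le_one one_lt_two)
  simp_rw [e₃, e₁, e₂] at key
  exact key

/-- For positive reals `θ, μ`,
`Ψ_1(θ)Ψ_2(θ+μ) - Ψ_1(θ+μ)Ψ_2(θ) > 0`, where `Ψ n` is the polygamma function
of order `n`, characterized by its integral representation for `x > 0`. -/
theorem stmt_1
    (Ψ : ℕ → ℝ → ℝ)
    (hΨ : ∀ (k : ℕ) (x : ℝ), 1 ≤ k → 0 < x →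
      Ψ k x = (-1 : ℝ) ^ (k + 1) *
        ∫ t in Set.Ioi (0 : ℝ), t ^ k * Real.exp (-x * t) / (1 - Real.exp (-t)))
    (θ μ : ℝ) (hθ : 0 < θ) (hμ : 0 < μ) :
    0 < Ψ 1 θ * Ψ 2 (θ + μ) - Ψ 1 (θ + μ) * Ψ 2 θ := by
  have hΨ' : ∀ k x, 1 ≤ k → 0 < x → Ψ k x = (-1 : ℝ) ^ (k + 1) * polygammaIntegral k x := hΨ
  have hθμ : 0 < θ + μ := add_pos hθ hμ
  rw [hΨ' 1 θ le_rfl hθ, hΨ' 2 θ one_le_two hθ, hΨ' 1 _ le_rfl hθμ, hΨ' 2 _ one_le_two hθμ]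
  norm_num only
  linarith [polygammaIntegral_one_mul_two_lt hθ hμ]
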